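/- arXiv:2305.02658 — 6 statements merged into one kernel-verified Lean document; each statement's English description precedes it below -/
import Mathlib

section
/- For all a, b ∈ ℂ and all m, n, k ∈ ℤ, the identity p^{−n} q^n c^{a,b}_m(k) c^{a,b}_n(k+m) − p^{−m} q^m c^{a,b}_n(k) c^{a,b}_m(k+n) = ([m]_{p,q}/p^m − [n]_{p,q}/p^n) c^{a,b}_{m+n}(k) holds, where c^{a,b}_n(k) = p^{−k}[k]_{p,q} − a p^{−k} q^k − b p^{−k−n} q^k [n]_{p,q}. Consequently, the operators L_n on the complex vector space with basis {v_k : k ∈ ℤ} defined by L_n v_k = c^{a,b}_n(k) v_{k+n} make it a V_{p,q}-module, denoted M_{a,b}. -/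
/-- The `(p,q)`-quantum integer `[n]_{p,q} = (p^n - q^n)/(p - q)`. -/
noncomputable def qint (p q : ℂ) (n : ℤ) : ℂ := (p ^ n - q ^ n) / (p - q)

/-- The structure constant `c^{a,b}_n(k) = p^{-k}[k] - a p^{-k} q^k - b p^{-k-n} q^k [n]`. -/
noncomputable def cab (p q a b : ℂ) (n k : ℤ) : ℂ :=
  p ^ (-k) * qint p q k - a * p ^ (-k) * q ^ k - b * p ^ (-k - n) * q ^ k * qint p q n

/-- The operator `L_n` on `M_{a,b}`, realized on `ℤ →₀ ℂ` (basis `v_k = single k 1`),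
`L_n v_k = c^{a,b}_n(k) v_{k+n}`. -/
noncomputable def Lab (p q a b : ℂ) (n : ℤ) : (ℤ →₀ ℂ) →ₗ[ℂ] (ℤ →₀ ℂ) :=
  Finsupp.lsum ℂ fun k => cab p q a b n k • Finsupp.lsingle (k + n)

/-- The defining relation of a `V_{p,q}`-module. -/
def IsVpqModule (p q : ℂ) {M : Type} [AddCommGroup M] [Module ℂ M]
    (L : ℤ → M →ₗ[ℂ] M) : Prop :=
  ∀ m n : ℤ, ∀ v : M,
    (p ^ (-n) * q ^ n) • L n (L m v) - (p ^ (-m) * q ^ m) • L m (L n v) =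
      (qint p q m / p ^ m - qint p q n / p ^ n) • L (m + n) v

lemma cab_eq (p q a b : ℂ) (hp : p ≠ 0) (hpq : p - q ≠ 0) (n k : ℤ) :
    cab p q a b n k =
      (p ^ n * (p ^ k - q ^ k) - a * p ^ n * q ^ k * (p - q) - b * q ^ k * (p ^ n - q ^ n)) /
        (p ^ k * p ^ n * (p - q)) := by
  have hpk : (p : ℂ) ^ k ≠ 0 := zpow_ne_zero _ hp
  have hpn : (p : ℂ) ^ n ≠ 0 := zpow_ne_zero _ hp
  simp only [cab, qint, zpow_neg, zpow_sub₀ hp]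
  field_simp

set_option maxHeartbeats 2000000 in
lemma key (p q : ℂ) (hp : p ≠ 0) (hq : q ≠ 0) (hpq : p ≠ q)
    (a b : ℂ) (m n k : ℤ) :
      p ^ (-n) * q ^ n * (cab p q a b m k * cab p q a b n (k + m)) -
        p ^ (-m) * q ^ m * (cab p q a b n k * cab p q a b m (k + n)) =
      (qint p q m / p ^ m - qint p q n / p ^ n) * cab p q a b (m + n) k := by
  have hd : p - q ≠ 0 := sub_ne_zero.mpr hpq
  have hpm : p ^ m ≠ 0 := zpow_ne_zero _ hp
  have hpn : p ^ n ≠ 0 := zpow_ne_zero _ hp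
  have hpk : p ^ k ≠ 0 := zpow_ne_zero _ hp
  simp only [cab_eq p q a b hp hd, qint, zpow_add₀ hp, zpow_add₀ hq, zpow_neg,
    inv_mul_eq_div, div_mul_div_comm, div_div, mul_one, one_mul]
  generalize p ^ m = P at *
  generalize p ^ n = N at *
  generalize p ^ k = K at *
  generalize q ^ m = Q
  generalize q ^ n = S
  generalize q ^ k = R
  have h1 : N * (K * P * (p - q) * (K * P * N * (p - q))) ≠ 0 := by
    apply_rules [mul_ne_zero]
  have h2 : P * (K * N * (p - q) * (K * N * P * (p - q))) ≠ 0 := by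
    apply_rules [mul_ne_zero]
  have h3 : (p - q) * P ≠ 0 := mul_ne_zero hd hpm
  have h4 : (p - q) * N ≠ 0 := mul_ne_zero hd hpn
  rw [div_sub_div _ _ h1 h2, div_sub_div _ _ h3 h4, div_mul_div_comm,
    div_eq_div_iff (mul_ne_zero h1 h2) (by apply_rules [mul_ne_zero])]
  ring

lemma Lab_single (p q a b : ℂ) (n k : ℤ) (c : ℂ) :
    Lab p q a b n (Finsupp.single k c) = cab p q a b n k • Finsupp.single (k + n) c := by
  rw [Lab, Finsupp.lsum_single]
  simp [Finsupp.smul_single]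

/-- The structure constants of `M_{a,b}` satisfy the `V_{p,q}` relation, and consequently
`M_{a,b}` is a `V_{p,q}`-module for every `a, b ∈ ℂ`. -/
theorem Mab_is_VpqModule (p q : ℂ) (hp : p ≠ 0) (hq : q ≠ 0) (hpq : p ≠ q) :
    (∀ a b : ℂ, ∀ m n k : ℤ,
      p ^ (-n) * q ^ n * (cab p q a b m k * cab p q a b n (k + m)) -
        p ^ (-m) * q ^ m * (cab p q a b n k * cab p q a b m (k + n)) =
      (qint p q m / p ^ m - qint p q n / p ^ n) * cab p q a b (m + n) k) ∧
    (∀ a b : ℂ, IsVpqModule p q (Lab p q a b)) := by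
  refine ⟨fun a b m n k => key p q hp hq hpq a b m n k, fun a b m n v => ?_⟩
  have hmaps :
      (p ^ (-n) * q ^ n) • ((Lab p q a b n).comp (Lab p q a b m)) -
        (p ^ (-m) * q ^ m) • ((Lab p q a b m).comp (Lab p q a b n)) =
      (qint p q m / p ^ m - qint p q n / p ^ n) • Lab p q a b (m + n) := by
    apply Finsupp.lhom_ext
    intro k c
    simp only [LinearMap.sub_apply, LinearMap.smul_apply, LinearMap.comp_apply,
      Lab_single, map_smul, smul_smul]
    rw [show k + m + n = k + (m + n) by ring, show k + n + m = k + (m + n) by ring,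
      ← sub_smul]
    congr 1
    linear_combination key p q hp hq hpq a b m n k
  have := LinearMap.ext_iff.mp hmaps v
  simpa using this
end

section
/- Suppose q/p is not a root of unity and a ∈ ℂ satisfies a ≠ −1/(p−q). Then the map ℤ → ℂ given by k ↦ p^{−k}[k]_{p,q} − a p^{−k} q^k is injective. Consequently, every weight of the module M_{a,b} (i.e., every eigenvalue of L_0 on M_{a,b}) has multiplicity one: the eigenspace of L_0 for the eigenvalue p^{−k}[k]_{p,q} − a p^{−k} q^k is exactly ℂ v_k. -/
lemma cab_zero (p q a b : ℂ) (k : ℤ) :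
    cab p q a b 0 k = p ^ (-k) * qint p q k - a * p ^ (-k) * q ^ k := by
  simp [cab, qint]

lemma Lab_zero_apply (p q a b : ℂ) (v : ℤ →₀ ℂ) (j : ℤ) :
    Lab p q a b 0 v j = cab p q a b 0 j * v j := by
  classical
  simp only [Lab, Finsupp.lsum_apply, Finsupp.sum_apply, LinearMap.smul_apply,
    Finsupp.lsingle_apply, Finsupp.smul_apply, Finsupp.single_apply, add_zero, smul_eq_mul,
    mul_ite, mul_zero]
  rw [Finsupp.sum_ite_eq' v j (fun k c => cab p q a b 0 k * c)]
  split_ifs with h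
  · rfl
  · rw [Finsupp.notMem_support_iff.mp h, mul_zero]

/-- If `q/p` is not a root of unity and `a ≠ -1/(p-q)`, the weights
`k ↦ p^{-k}[k] - a p^{-k} q^k` of `M_{a,b}` are pairwise distinct, and each eigenspace of
`L_0` is exactly the corresponding line `ℂ v_k`. -/
theorem Mab_weights_multiplicity_one (p q : ℂ) (hp : p ≠ 0) (hq : q ≠ 0) (hpq : p ≠ q)
    (hroot : ∀ n : ℤ, n ≠ 0 → (q / p) ^ n ≠ 1)
    (a b : ℂ) (ha : a ≠ -1 / (p - q)) :
    Function.Injective (fun k : ℤ => p ^ (-k) * qint p q k - a * p ^ (-k) * q ^ k) ∧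
    (∀ k : ℤ,
      Module.End.eigenspace (Lab p q a b 0) (p ^ (-k) * qint p q k - a * p ^ (-k) * q ^ k) =
        Submodule.span ℂ {Finsupp.single k (1 : ℂ)}) := by
  classical
  have hqp : q / p ≠ 0 := div_ne_zero hq hp
  have hps : p - q ≠ 0 := sub_ne_zero.mpr hpq
  set f : ℤ → ℂ := fun k => p ^ (-k) * qint p q k - a * p ^ (-k) * q ^ k with hfdef
  have hrw : ∀ k : ℤ, f k = 1 / (p - q) - (1 / (p - q) + a) * (q / p) ^ k := by
    intro k
    have hpk : (p : ℂ) ^ k ≠ 0 := zpow_ne_zero _ hp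
    simp only [hfdef, qint, zpow_neg, div_zpow]
    field_simp
    ring
  have hc : 1 / (p - q) + a ≠ 0 := by
    intro h
    exact ha (by rw [neg_div]; linear_combination h)
  have hinj : Function.Injective f := by
    intro i j hij
    rw [hrw i, hrw j] at hij
    have hpow : (q / p) ^ i = (q / p) ^ j := mul_left_cancel₀ hc (by linear_combination -hij)
    by_contra hne
    exact hroot (i - j) (sub_ne_zero.mpr hne)
      (by rw [zpow_sub₀ hqp, hpow, div_self (zpow_ne_zero _ hqp)])
  refine ⟨hinj, fun k => le_antisymm ?_ ?_⟩
  · intro v hv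
    rw [Module.End.mem_eigenspace_iff] at hv
    have hcoord : ∀ j : ℤ, f j * v j = f k * v j := by
      intro j
      have := congrArg (fun w : ℤ →₀ ℂ => w j) hv
      simpa [Lab_zero_apply, cab_zero, hfdef] using this
    refine Submodule.mem_span_singleton.mpr ⟨v k, ?_⟩
    ext j
    rcases eq_or_ne j k with rfl | hjk
    · simp
    · have hvj : v j = 0 := by
        by_contra h
        exact hjk (hinj (mul_right_cancel₀ h (hcoord j)))
      simp [Finsupp.single_apply, Ne.symm hjk, hvj]
  · rw [Submodule.span_le, Set.singleton_subset_iff]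
    rw [SetLike.mem_coe, Module.End.mem_eigenspace_iff]
    ext j
    rcases eq_or_ne j k with rfl | hjk
    · simp [Lab_zero_apply, cab_zero, hfdef]
    · simp [Lab_zero_apply, cab_zero, Finsupp.single_apply, Ne.symm hjk]
end

section
/- Let a, b, a', b' ∈ ℂ and m ∈ ℤ satisfy a = −p^{−m}[m]_{p,q} + p^{−m} q^m a' and b = p^{−m} q^m b'. Then for all n, i ∈ ℤ one has c^{a,b}_n(i) = c^{a',b'}_n(i+m), where c^{a,b}_n(k) = p^{−k}[k]_{p,q} − a p^{−k} q^k − b p^{−k−n} q^k [n]_{p,q}. Consequently, the ℂ-linear map φ : M_{a,b} → M_{a',b'} determined by φ(v_i) = v'_{i+m} is a bijection satisfying φ(L_n w) = L_n φ(w) for all n ∈ ℤ and w ∈ M_{a,b}, i.e., M_{a,b} ≅ M_{a',b'} as V_{p,q}-modules. -/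
/-- If `a = -p^{-m}[m] + p^{-m} q^m a'` and `b = p^{-m} q^m b'`, then the structure constants
match under the index shift `i ↦ i + m`, and the shift map `φ(v_i) = v'_{i+m}` is a
`V_{p,q}`-module isomorphism `M_{a,b} ≅ M_{a',b'}`. -/
theorem Mab_iso_of_shift (p q : ℂ) (hp : p ≠ 0) (hq : q ≠ 0) (hpq : p ≠ q)
    (a b a' b' : ℂ) (m : ℤ)
    (ha : a = -(p ^ (-m) * qint p q m) + p ^ (-m) * q ^ m * a')
    (hb : b = p ^ (-m) * q ^ m * b') :
    (∀ n i : ℤ, cab p q a b n i = cab p q a' b' n (i + m)) ∧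
    (Function.Bijective (Finsupp.lmapDomain ℂ ℂ (fun i : ℤ => i + m)) ∧
      ∀ (n : ℤ) (w : ℤ →₀ ℂ),
        Finsupp.lmapDomain ℂ ℂ (fun i : ℤ => i + m) (Lab p q a b n w) =
          Lab p q a' b' n (Finsupp.lmapDomain ℂ ℂ (fun i : ℤ => i + m) w)) := by

  have hpq' : p - q ≠ 0 := sub_ne_zero.mpr hpq
  have key : ∀ n i : ℤ, cab p q a b n i = cab p q a' b' n (i + m) := by
    intro n i
    have qadd : qint p q (i + m) = p ^ m * qint p q i + q ^ i * qint p q m := by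
      simp only [qint, zpow_add₀ hp, zpow_add₀ hq]
      field_simp
      ring
    have hpi : ∀ k : ℤ, p ^ k ≠ 0 := fun k => zpow_ne_zero k hp
    simp only [cab, ha, hb, qadd]
    rw [show (-(i + m) : ℤ) = -i + -m by ring, show (-i + -m - n : ℤ) = -i + -n + -m by ring,
      show (-i - n : ℤ) = -i + -n by ring]
    simp only [zpow_add₀ hp, zpow_add₀ hq, zpow_neg]
    linear_combination (-(p ^ i)⁻¹ * qint p q i) * mul_inv_cancel₀ (hpi m)
  refine ⟨key, ?_, ?_⟩
  · constructor
    · exact Finsupp.mapDomain_injective (fun x y h => by omega)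
    · intro w
      refine ⟨Finsupp.lmapDomain ℂ ℂ (fun i : ℤ => i - m) w, ?_⟩
      simp only [Finsupp.lmapDomain_apply]
      rw [← Finsupp.mapDomain_comp,
        show ((fun i : ℤ => i + m) ∘ fun i : ℤ => i - m) = id from funext fun x => by simp]
      exact Finsupp.mapDomain_id
  · intro n w
    have hlm : (Finsupp.lmapDomain ℂ ℂ (fun i : ℤ => i + m)).comp (Lab p q a b n) =
        (Lab p q a' b' n).comp (Finsupp.lmapDomain ℂ ℂ (fun i : ℤ => i + m)) := by
      apply Finsupp.lhom_ext
      intro k c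
      simp only [LinearMap.comp_apply, Finsupp.lmapDomain_apply, Lab,
        Finsupp.lsum_single, LinearMap.smul_apply, Finsupp.lsingle_apply,
        Finsupp.mapDomain_single, Finsupp.mapDomain_smul, key n k]
      rw [show k + n + m = k + m + n by ring]
    exact LinearMap.congr_fun hlm w
end

section
/- Let m ∈ ℤ and suppose a = −p^{−m}[m]_{p,q} and b = 0. Then L_n v_{−m} = 0 in M_{a,0} for every n ∈ ℤ with n ≠ 0 (equivalently, p^{m}[−m]_{p,q} − a p^{m} q^{−m} = 0), and L_0 v_{−m} = 0; consequently ℂ v_{−m} is a one-dimensional nonzero proper submodule of M_{a,0}, so M_{a,0} is reducible. -/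
/-- If `a = -p^{-m}[m]` and `b = 0`, then `L_n v_{-m} = 0` for every `n`, so the line
`ℂ v_{-m}` is a one-dimensional nonzero proper submodule of `M_{a,0}`; hence `M_{a,0}`
is reducible. -/
theorem Mab_reducible_case2 (p q : ℂ) (hp : p ≠ 0) (hq : q ≠ 0) (hpq : p ≠ q)
    (a : ℂ) (m : ℤ) (ha : a = -(p ^ (-m) * qint p q m)) :
    (p ^ m * qint p q (-m) - a * p ^ m * q ^ (-m) = 0) ∧
    (∀ n : ℤ, Lab p q a 0 n (Finsupp.single (-m) (1 : ℂ)) = 0) ∧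
    (∀ U : Submodule ℂ (ℤ →₀ ℂ),
      U = Submodule.span ℂ {Finsupp.single (-m) (1 : ℂ)} →
      (∀ n : ℤ, ∀ u ∈ U, Lab p q a 0 n u ∈ U) ∧ U ≠ ⊥ ∧ U ≠ ⊤ ∧
        Module.rank ℂ U = 1) := by
  have hpq' : p - q ≠ 0 := sub_ne_zero.mpr hpq
  have hpm : p ^ m ≠ 0 := zpow_ne_zero m hp
  have hqm : q ^ m ≠ 0 := zpow_ne_zero m hq
  have hq2 : qint p q (-m) = -(p ^ (-m) * q ^ (-m)) * qint p q m := by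
    unfold qint
    rw [div_eq_iff hpq']
    simp only [zpow_neg]
    field_simp
    ring
  have key : p ^ m * qint p q (-m) - a * p ^ m * q ^ (-m) = 0 := by
    rw [ha, hq2]
    have h1 : p ^ m * p ^ (-m) = 1 := by
      rw [← zpow_add₀ hp]; simp
    simp only [zpow_neg] at h1 ⊢
    field_simp
    ring
  have hc : ∀ n : ℤ, cab p q a 0 n (-m) = 0 := by
    intro n
    unfold cab
    rw [neg_neg]
    simp only [zero_mul, mul_zero, sub_zero]
    linear_combination key
  have hL : ∀ n : ℤ, Lab p q a 0 n (Finsupp.single (-m) (1 : ℂ)) = 0 := by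
    intro n
    unfold Lab
    rw [Finsupp.lsum_single]
    simp [hc n]
  refine ⟨key, hL, ?_⟩
  intro U hU
  subst hU
  have hne : Finsupp.single (-m) (1 : ℂ) ≠ 0 := fun h => (one_ne_zero : (1 : ℂ) ≠ 0) (by simpa using DFunLike.congr_fun h (-m))
  refine ⟨?_, ?_, ?_, ?_⟩
  · intro n u hu
    rw [Submodule.mem_span_singleton] at hu
    obtain ⟨c, rfl⟩ := hu
    rw [map_smul, hL]
    simp
  · rw [Ne, Submodule.span_singleton_eq_bot]
    exact hne
  · intro h
    have hmem : Finsupp.single (-m + 1) (1 : ℂ) ∈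
        Submodule.span ℂ {Finsupp.single (-m) (1 : ℂ)} := h ▸ Submodule.mem_top
    rw [Submodule.mem_span_singleton] at hmem
    obtain ⟨c, hc'⟩ := hmem
    have h2 := DFunLike.congr_fun hc' (-m + 1)
    have hne' : -m ≠ -m + 1 := by omega
    simp [Finsupp.single_apply, hne'] at h2
  · rw [rank_span_set (LinearIndepOn.singleton (R := ℂ) (v := id) (i := Finsupp.single (-m) (1 : ℂ)) hne), Cardinal.mk_singleton]
end

section
/- Let p, q be nonzero complex numbers with p ≠ q such that q/p is not a root of unity, and let V be the Hom-Lie algebra V_{p,q} with basis {L_n : n ∈ ℤ} ∪ {C} and bracket [L_n, L_m] = ([n]_{p,q}/p^n − [m]_{p,q}/p^m) L_{n+m} + δ_{m+n,0} · ((q/p)^{−n}/(6(1 + (q/p)^n))) · ([n−1]_{p,q}/p^{n−1}) ([n]_{p,q}/p^n) ([n+1]_{p,q}/p^{n+1}) C, [L_n, C] = 0. Then the smallest ℂ-subspace of V containing L_1, L_{−1}, L_2, L_{−2} and closed under the bracket (i.e., containing [x,y] whenever it contains x and y) is all of V; in particular every L_n and C lie in this subspace. -/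
/-- The underlying space of `V_{p,q}`: the span of the `L_n` together with the central
element `C`. -/
abbrev VpqSpace : Type := (ℤ →₀ ℂ) × ℂ

/-- The basis element `L_n` of `V_{p,q}`. -/
noncomputable def Lgen (n : ℤ) : VpqSpace := (Finsupp.single n (1 : ℂ), 0)

/-- The central basis element `C` of `V_{p,q}`. -/
noncomputable def Cgen : VpqSpace := (0, 1)

/-- The coefficient of `C` in `[L_n, L_m]`. -/
noncomputable def centralCoeff (p q : ℂ) (n m : ℤ) : ℂ :=
  if m + n = 0 then
    (q / p) ^ (-n) / (6 * (1 + (q / p) ^ n)) *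
      (qint p q (n - 1) / p ^ (n - 1)) * (qint p q n / p ^ n) * (qint p q (n + 1) / p ^ (n + 1))
  else 0

/-- The bilinear bracket on `V_{p,q}`, determined by
`[L_n, L_m] = ([n]/p^n - [m]/p^m) L_{n+m} + δ_{m+n,0} ⋯ C` and `[L_n, C] = 0`. -/
noncomputable def vbracket (p q : ℂ) (x y : VpqSpace) : VpqSpace :=
  ( x.1.sum fun n xn => y.1.sum fun m ym =>
      (xn * ym * (qint p q n / p ^ n - qint p q m / p ^ m)) • Finsupp.single (n + m) (1 : ℂ),
    x.1.sum fun n xn => y.1.sum fun m ym => xn * ym * centralCoeff p q n m )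

lemma qint_div (p q : ℂ) (hp : p ≠ 0) (n : ℤ) :
    qint p q n / p ^ n = (1 - (q/p)^n) / (p - q) := by
  have hpn : (p:ℂ) ^ n ≠ 0 := zpow_ne_zero n hp
  rw [qint, div_zpow, div_div, mul_comm, ← div_div, sub_div, div_self hpn]

lemma vbracket_L (p q : ℂ) (n m : ℤ) :
    vbracket p q (Lgen n) (Lgen m) =
      (qint p q n / p ^ n - qint p q m / p ^ m) • Lgen (n + m) +
        centralCoeff p q n m • Cgen := by
  unfold vbracket Lgen Cgen
  refine Prod.ext ?_ ?_ <;>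
    · dsimp only
      rw [Finsupp.sum_single_index (by simp)]
      rw [Finsupp.sum_single_index (by simp)]
      simp

section
variable {p q : ℂ} (hp : p ≠ 0) (hq : q ≠ 0) (hpq : p ≠ q)
    (hroot : ∀ n : ℤ, n ≠ 0 → (q / p) ^ n ≠ 1)

include hp hq hroot in
lemma zpow_ne_of_ne (n m : ℤ) (hnm : n ≠ m) : (q/p)^n ≠ (q/p)^m := by
  have ht : q/p ≠ 0 := div_ne_zero hq hp
  intro h
  apply hroot (n - m) (sub_ne_zero.mpr hnm)
  rw [zpow_sub₀ ht, h, div_self (zpow_ne_zero m ht)]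

include hp hq hpq hroot in
lemma coeff_ne (n m : ℤ) (hnm : n ≠ m) :
    qint p q n / p ^ n - qint p q m / p ^ m ≠ 0 := by
  rw [qint_div p q hp, qint_div p q hp, div_sub_div_same]
  apply div_ne_zero _ (sub_ne_zero.mpr hpq)
  intro h
  exact zpow_ne_of_ne hp hq hroot n m hnm (by linear_combination -h)

include hp hq hpq hroot in
lemma qint_ne (n : ℤ) (hn : n ≠ 0) : qint p q n / p ^ n ≠ 0 := by
  rw [qint_div p q hp]
  apply div_ne_zero _ (sub_ne_zero.mpr hpq)
  intro h
  exact zpow_ne_of_ne hp hq hroot n 0 hn (by rw [zpow_zero]; linear_combination -h)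

end


/-- If `q/p` is not a root of unity, any `ℂ`-subspace of `V_{p,q}` containing
`L_1, L_{-1}, L_2, L_{-2}` and closed under the bracket is all of `V_{p,q}`;
in particular it contains every `L_n` and `C`. -/
theorem Vpq_generated_by_L1_L2 (p q : ℂ) (hp : p ≠ 0) (hq : q ≠ 0) (hpq : p ≠ q)
    (hroot : ∀ n : ℤ, n ≠ 0 → (q / p) ^ n ≠ 1)
    (W : Submodule ℂ VpqSpace)
    (h1 : Lgen 1 ∈ W) (hm1 : Lgen (-1) ∈ W) (h2 : Lgen 2 ∈ W) (hm2 : Lgen (-2) ∈ W)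
    (hclosed : ∀ x ∈ W, ∀ y ∈ W, vbracket p q x y ∈ W) :
    W = ⊤ := by
  have ht : q/p ≠ 0 := div_ne_zero hq hp
  -- step lemma
  have step : ∀ n m : ℤ, n ≠ m → n + m ≠ 0 → Lgen n ∈ W → Lgen m ∈ W →
      Lgen (n + m) ∈ W := by
    intro n m hnm hsum hn hm
    have hb := hclosed _ hn _ hm
    rw [vbracket_L] at hb
    have hc0 : centralCoeff p q n m = 0 := by rw [centralCoeff, if_neg (by omega)]
    rw [hc0, zero_smul, add_zero] at hb
    have hcne := coeff_ne hp hq hpq hroot n m hnm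
    have := W.smul_mem (qint p q n / p ^ n - qint p q m / p ^ m)⁻¹ hb
    rwa [smul_smul, inv_mul_cancel₀ hcne, one_smul] at this
  -- L_0
  have hL0 : Lgen 0 ∈ W := by
    have hb := hclosed _ h1 _ hm1
    rw [vbracket_L] at hb
    have hc0 : centralCoeff p q 1 (-1) = 0 := by
      rw [centralCoeff, if_pos (by norm_num)]
      norm_num [qint]
    rw [hc0, zero_smul, add_zero] at hb
    have hcne := coeff_ne hp hq hpq hroot 1 (-1) (by norm_num)
    have := W.smul_mem (qint p q 1 / p ^ (1:ℤ) - qint p q (-1) / p ^ (-1:ℤ))⁻¹ hb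
    rw [smul_smul, inv_mul_cancel₀ hcne, one_smul] at this
    simpa using this
  -- C
  have hC : Cgen ∈ W := by
    have hb := hclosed _ h2 _ hm2
    rw [vbracket_L] at hb
    have h20 : (2 : ℤ) + (-2) = 0 := by norm_num
    rw [h20] at hb
    set a := qint p q 2 / p ^ (2:ℤ) - qint p q (-2) / p ^ (-2:ℤ) with ha
    set b := centralCoeff p q 2 (-2) with hbdef
    have hbne : b ≠ 0 := by
      rw [hbdef, centralCoeff, if_pos (by norm_num)]
      have h6 : (6 : ℂ) * (1 + (q/p)^(2:ℤ)) ≠ 0 := by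
        apply mul_ne_zero (by norm_num)
        intro h
        apply hroot 4 (by norm_num)
        have h2 : (q/p)^(2:ℤ) = -1 := by linear_combination h
        have h4 : (q/p)^(4:ℤ) = (q/p)^(2:ℤ) * (q/p)^(2:ℤ) := by
          rw [← zpow_add₀ ht]; norm_num
        rw [h4, h2]; ring
      exact mul_ne_zero (mul_ne_zero (mul_ne_zero
        (div_ne_zero (zpow_ne_zero _ ht) h6)
        (qint_ne hp hq hpq hroot (2-1) (by norm_num)))
        (qint_ne hp hq hpq hroot 2 (by norm_num)))
        (qint_ne hp hq hpq hroot (2+1) (by norm_num))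
    have hmem : b • Cgen ∈ W := by
      have := W.sub_mem hb (W.smul_mem a hL0)
      simpa using this
    have := W.smul_mem b⁻¹ hmem
    rwa [smul_smul, inv_mul_cancel₀ hbne, one_smul] at this
  -- all positive L_n
  have hpos : ∀ k : ℕ, Lgen ((k:ℤ) + 1) ∈ W := by
    intro k
    induction k using Nat.strong_induction_on with
    | _ k ih =>
      match k with
      | 0 => simpa using h1
      | 1 => show Lgen ((1:ℤ)+1) ∈ W; norm_num [h2]
      | (k+2) =>
        have hk : Lgen ((k:ℤ) + 2) ∈ W := by
          have := ih (k+1) (by omega); push_cast at this ⊢; convert this using 2 <;> (push_cast; ring)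
        have := step 1 ((k:ℤ)+2) (by omega) (by omega) h1 hk
        convert this using 2 <;> (push_cast; ring)
  have hneg : ∀ k : ℕ, Lgen (-((k:ℤ) + 1)) ∈ W := by
    intro k
    induction k using Nat.strong_induction_on with
    | _ k ih =>
      match k with
      | 0 => simpa using hm1
      | 1 => show Lgen (-((1:ℤ)+1)) ∈ W; norm_num [hm2]
      | (k+2) =>
        have hk : Lgen (-((k:ℤ) + 2)) ∈ W := by
          have := ih (k+1) (by omega); push_cast at this ⊢; convert this using 2 <;> (push_cast; ring)
        have := step (-1) (-((k:ℤ)+2)) (by omega) (by omega) hm1 hk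
        convert this using 2 <;> (push_cast; ring)
  have hLall : ∀ n : ℤ, Lgen n ∈ W := by
    intro n
    rcases n with (k | k)
    · match k with
      | 0 => exact hL0
      | (k+1) => have := hpos k; convert this using 2 <;> (simp only [Int.ofNat_eq_natCast]; push_cast; ring)
    · have := hneg k; convert this using 2 <;> (simp only [Int.negSucc_eq])
  -- conclude
  rw [eq_top_iff]
  rintro ⟨f, c⟩ -
  have hf : ∀ g : ℤ →₀ ℂ, ((g, (0:ℂ)) : VpqSpace) ∈ W := by
    intro g
    induction g using Finsupp.induction_linear with
    | zero => exact W.zero_mem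
    | add f g hfm hgm =>
      have := W.add_mem hfm hgm
      simpa [Prod.mk_add_mk] using this
    | single a b =>
      have := W.smul_mem b (hLall a)
      have heq : b • Lgen a = ((Finsupp.single a b, 0) : VpqSpace) := by
        rw [Lgen, Prod.smul_mk, Finsupp.smul_single', mul_one, smul_zero]
      exact heq ▸ this
  have hc : ((0, c) : VpqSpace) ∈ W := by
    have := W.smul_mem c hC
    have heq : c • Cgen = ((0, c) : VpqSpace) := by
      rw [Cgen, Prod.smul_mk, smul_zero, smul_eq_mul, mul_one]
    exact heq ▸ this
  have := W.add_mem (hf f) hc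
  have heq : ((f, (0:ℂ)) : VpqSpace) + (0, c) = (f, c) := by
    rw [Prod.mk_add_mk, add_zero, zero_add]
  exact heq ▸ this
end

section
/- Let a, b ∈ ℂ and let (a_i)_{i∈ℤ}, (b_i)_{i∈ℤ} be complex sequences satisfying, for every i ∈ ℤ, the recursion p^{−1} q a_{i−1} b_i − p q^{−1} a_i b_{i+1} = p q [−2]_{p,q} (p^{−i}[i]_{p,q} − a p^{−i} q^i), together with the initial condition a_0 b_1 = (−a − b p^{−1}[1]_{p,q}) (p^{−1}[1]_{p,q} − a p^{−1} q − b q [−1]_{p,q}). Then for every i ∈ ℤ: b_{i+1} a_i = (p^{−i−1}[i+1]_{p,q} − a p^{−i−1} q^{i+1} − b p^{−i} q^{i+1} [−1]_{p,q}) · (p^{−i}[i]_{p,q} − a p^{−i} q^i − b p^{−i−1} q^i [1]_{p,q}). -/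
private noncomputable def gfun (p q a b : ℂ) (i : ℤ) : ℂ :=
  (p ^ (-i - 1) * qint p q (i + 1) - a * p ^ (-i - 1) * q ^ (i + 1) -
      b * p ^ (-i) * q ^ (i + 1) * qint p q (-1)) *
    (p ^ (-i) * qint p q i - a * p ^ (-i) * q ^ i -
      b * p ^ (-i - 1) * q ^ i * qint p q 1)

private noncomputable def F1 (p q a b t : ℂ) : ℂ := (1 - (q/p)*t)/(p-q) - a*(q/p)*t + b*t/p
private noncomputable def F2 (p q a b t : ℂ) : ℂ := (1 - t)/(p-q) - a*t - b*t/p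

set_option maxHeartbeats 1000000 in
private lemma aux (p q : ℂ) (hp : p ≠ 0) (hq : q ≠ 0) (hpq : p ≠ q) (a b t : ℂ) :
    p ^ (-1:ℤ) * q * (F1 p q a b (p/q*t) * F2 p q a b (p/q*t))
      - p * q ^ (-1:ℤ) * (F1 p q a b t * F2 p q a b t)
      = p * q * qint p q (-2) * ((1-t)/(p-q) - a*t) := by
  have hpq' : p - q ≠ 0 := sub_ne_zero.mpr hpq
  unfold F1 F2 qint
  simp only [zpow_neg, zpow_one, zpow_two, show (-2:ℤ) = -1 + -1 by ring, zpow_add₀ hp,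
    zpow_add₀ hq]
  field_simp
  ring

private lemma gfun_eq (p q : ℂ) (hp : p ≠ 0) (hq : q ≠ 0) (hpq : p ≠ q) (a b : ℂ) (i : ℤ) :
    gfun p q a b i = F1 p q a b (p ^ (-i) * q ^ i) * F2 p q a b (p ^ (-i) * q ^ i) := by
  have hpq' : p - q ≠ 0 := sub_ne_zero.mpr hpq
  have hpi : p ^ i ≠ 0 := zpow_ne_zero i hp
  have hqi : q ^ i ≠ 0 := zpow_ne_zero i hq
  unfold gfun F1 F2 qint
  simp only [zpow_sub₀ hp, zpow_add₀ hp, zpow_add₀ hq, zpow_neg, zpow_one, zpow_zero]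
  congr 1 <;>
  · field_simp
    try rw [div_eq_div_iff (by apply_rules [mul_ne_zero]) (by apply_rules [mul_ne_zero])]
    try rw [div_sub_div _ _ (by apply_rules [mul_ne_zero]) (by apply_rules [mul_ne_zero])]
    try rw [div_eq_div_iff (by apply_rules [mul_ne_zero]) (by apply_rules [mul_ne_zero])]
    try ring

private lemma base_eq (p q : ℂ) (hp : p ≠ 0) (hq : q ≠ 0) (hpq : p ≠ q) (a : ℂ) (i : ℤ) :
    p ^ (-i) * qint p q i - a * p ^ (-i) * q ^ i
      = (1 - p ^ (-i) * q ^ i)/(p-q) - a * (p ^ (-i) * q ^ i) := by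
  have hpq' : p - q ≠ 0 := sub_ne_zero.mpr hpq
  have hpi : p ^ i ≠ 0 := zpow_ne_zero i hp
  unfold qint
  simp only [zpow_neg]
  field_simp
  try rw [div_eq_div_iff (by apply_rules [mul_ne_zero]) (by apply_rules [mul_ne_zero])]
  try ring

private lemma tshift (p q : ℂ) (hp : p ≠ 0) (hq : q ≠ 0) (i : ℤ) :
    p ^ (-(i-1)) * q ^ (i-1) = p/q * (p ^ (-i) * q ^ i) := by
  have hqi : q ^ i ≠ 0 := zpow_ne_zero i hq
  simp only [show -(i-1) = -i + 1 by ring, show i - 1 = i + (-1) by ring, zpow_add₀ hp,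
    zpow_add₀ hq, zpow_one, zpow_neg]
  field_simp
  try ring

private lemma gfun_rec (p q : ℂ) (hp : p ≠ 0) (hq : q ≠ 0) (hpq : p ≠ q) (a b : ℂ) (i : ℤ) :
    p ^ (-1 : ℤ) * q * gfun p q a b (i - 1) - p * q ^ (-1 : ℤ) * gfun p q a b i =
      p * q * qint p q (-2) * (p ^ (-i) * qint p q i - a * p ^ (-i) * q ^ i) := by
  rw [gfun_eq p q hp hq hpq a b (i-1), gfun_eq p q hp hq hpq a b i,
    tshift p q hp hq i, base_eq p q hp hq hpq a i]
  exact aux p q hp hq hpq a b _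

/-- The recursion `p⁻¹q a_{i-1} b_i - p q⁻¹ a_i b_{i+1} = pq[-2](p^{-i}[i] - a p^{-i} q^i)`
together with the initial condition on `a₀ b₁` forces the product formula for
`b_{i+1} a_i` for every `i ∈ ℤ`. -/
theorem product_formula_from_recursion (p q : ℂ) (hp : p ≠ 0) (hq : q ≠ 0) (hpq : p ≠ q)
    (a b : ℂ) (A B : ℤ → ℂ)
    (hrec : ∀ i : ℤ,
      p ^ (-1 : ℤ) * q * (A (i - 1) * B i) - p * q ^ (-1 : ℤ) * (A i * B (i + 1)) =
        p * q * qint p q (-2) * (p ^ (-i) * qint p q i - a * p ^ (-i) * q ^ i))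
    (hinit : A 0 * B 1 =
      (-a - b * p ^ (-1 : ℤ) * qint p q 1) *
        (p ^ (-1 : ℤ) * qint p q 1 - a * p ^ (-1 : ℤ) * q - b * q * qint p q (-1))) :
    ∀ i : ℤ, B (i + 1) * A i =
      (p ^ (-i - 1) * qint p q (i + 1) - a * p ^ (-i - 1) * q ^ (i + 1) -
          b * p ^ (-i) * q ^ (i + 1) * qint p q (-1)) *
        (p ^ (-i) * qint p q i - a * p ^ (-i) * q ^ i -
          b * p ^ (-i - 1) * q ^ i * qint p q 1) := by
  have key : ∀ i : ℤ, A i * B (i + 1) = gfun p q a b i := by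
    intro i
    induction i using Int.induction_on with
    | zero =>
      have h0 : gfun p q a b 0 =
          (-a - b * p ^ (-1 : ℤ) * qint p q 1) *
            (p ^ (-1 : ℤ) * qint p q 1 - a * p ^ (-1 : ℤ) * q - b * q * qint p q (-1)) := by
        unfold gfun qint
        norm_num
        try ring
      rw [show ((0:ℤ) + 1) = 1 from rfl, hinit, h0]
    | succ n ih =>
      have h1 := hrec ((n : ℤ) + 1)
      have h2 := gfun_rec p q hp hq hpq a b ((n : ℤ) + 1)
      rw [show ((n : ℤ) + 1 - 1) = n by ring] at h1 h2
      rw [ih] at h1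
      have h5 : p * q ^ (-1 : ℤ) ≠ 0 := by simp [hp, hq]
      have h4 : p * q ^ (-1 : ℤ) * (A ((n : ℤ) + 1) * B ((n : ℤ) + 1 + 1)) =
          p * q ^ (-1 : ℤ) * gfun p q a b ((n : ℤ) + 1) := by
        linear_combination h2 - h1
      exact mul_left_cancel₀ h5 h4
    | pred n ih =>
      have h1 := hrec (-(n : ℤ))
      have h2 := gfun_rec p q hp hq hpq a b (-(n : ℤ))
      rw [ih] at h1
      have h5 : p ^ (-1 : ℤ) * q ≠ 0 := by simp [hp, hq]
      have h4 : p ^ (-1 : ℤ) * q * (A (-(n : ℤ) - 1) * B (-(n : ℤ) - 1 + 1)) =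
          p ^ (-1 : ℤ) * q * gfun p q a b (-(n : ℤ) - 1) := by
        rw [show (-(n : ℤ) - 1 + 1) = -(n : ℤ) by ring]
        linear_combination h1 - h2
      exact mul_left_cancel₀ h5 h4
  intro i
  rw [mul_comm, key i]
  rfl
end
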